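/- Let w be the width of a jointree for a base network G and let n be its number of jointree nodes. Then the jointree for the twin network G^t produced by Algorithm 1 from this jointree has width no greater than 2w + 1 and number of nodes no greater than 2n. -/

import Mathlib

namespace Counterfactual

attribute [local instance] Classical.propDecidable

noncomputable section

universe u v

variable {V : Type u}

variable {V : Type u}

/-- The directed graph given by edge relation `E` (`E p c` means `p` is a parent of `c`)
is acyclic, i.e. it is a DAG. -/
def IsAcyclicRel (E : V → V → Prop) : Prop := ∀ x, ¬ Relation.TransGen E x x

/-- `x` is a root of the DAG `E`: it has no parents.  Non-roots are called internal. -/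
def isRoot (E : V → V → Prop) (x : V) : Prop := ∀ p, ¬ E p x

/-- The family of variable `X` in the DAG `E`: `X` together with its parents. -/
def famOf (E : V → V → Prop) (X : V) : Set V := insert X {p | E p X}

/-- The moral graph of the DAG `E`: connect every pair of nodes having a common child,
then drop directions. -/
def moralGraph (E : V → V → Prop) : SimpleGraph V where
  Adj u w := u ≠ w ∧ (E u w ∨ E w u ∨ ∃ c, E u c ∧ E w c)
  symm := by
    refine ⟨?_⟩
    intro u w h
    obtain ⟨h1, h2⟩ := h
    refine ⟨Ne.symm h1, ?_⟩
    rcases h2 with h | h | ⟨c, hc1, hc2⟩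
    · exact Or.inr (Or.inl h)
    · exact Or.inl h
    · exact Or.inr (Or.inr ⟨c, hc2, hc1⟩)
  loopless := by
    refine ⟨?_⟩
    intro u h
    exact h.1 rfl

/-- Eliminating vertex `x` from an undirected graph: pairwise connect the neighbors
of `x`, then remove (isolate) `x`. -/
def eliminate (G : SimpleGraph V) (x : V) : SimpleGraph V where
  Adj u w := u ≠ w ∧ u ≠ x ∧ w ≠ x ∧ (G.Adj u w ∨ (G.Adj u x ∧ G.Adj x w))
  symm := by
    refine ⟨?_⟩
    intro u w h
    obtain ⟨h1, h2, h3, h4⟩ := h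
    refine ⟨Ne.symm h1, h3, h2, ?_⟩
    rcases h4 with h | ⟨ha, hb⟩
    · exact Or.inl h.symm
    · exact Or.inr ⟨hb.symm, ha.symm⟩
  loopless := by
    refine ⟨?_⟩
    intro u h
    exact h.1 rfl

/-- Eliminate a list of vertices, in order. -/
def elimList (G : SimpleGraph V) : List V → SimpleGraph V
  | [] => G
  | x :: xs => elimList (eliminate G x) xs

/-- The graph obtained from `G` after eliminating the first `i` variables of `π`. -/
def graphAt (G : SimpleGraph V) (π : List V) (i : ℕ) : SimpleGraph V :=
  elimList G (π.take i)

/-- `x` together with its neighbors in the undirected graph `G`. -/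
def closedNbhd (G : SimpleGraph V) (x : V) : Set V := insert x {y | G.Adj x y}

/-- An elimination order: a total ordering of all the variables. -/
def IsElimOrder (π : List V) : Prop := π.Nodup ∧ ∀ x : V, x ∈ π

/-- The cluster of variable `X` in the elimination process on the moral graph of `E`
induced by `π`: `X` together with its neighbors in the graph just before `X` is eliminated. -/
def clusterOf (E : V → V → Prop) (π : List V) (X : V) : Set V :=
  closedNbhd (graphAt (moralGraph E) π (π.idxOf X)) X

/-- The width of an elimination order: the size of its largest cluster minus one. -/
def orderWidth (E : V → V → Prop) (π : List V) : ℕ :=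
  sSup {n : ℕ | ∃ X ∈ π, n = (clusterOf E π X).ncard} - 1

/-- The treewidth of the DAG `E`: the minimum width attained by an elimination order. -/
def treewidthOf (E : V → V → Prop) : ℕ :=
  sInf {w : ℕ | ∃ π : List V, IsElimOrder π ∧ orderWidth E π = w}

/-! ### Twin networks -/

/-- The variables of the twin network of `E`: the base variables (`Sum.inl`) together
with a duplicate (`Sum.inr`) for every internal (non-root) variable. -/
abbrev TwinVar (E : V → V → Prop) : Type u := V ⊕ {x : V // ¬ isRoot E x}

/-- The duplicate `X'` of a variable `X`; by convention `X' = X` when `X` is a root. -/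
def twinDup (E : V → V → Prop) (x : V) : TwinVar E :=
  if h : isRoot E x then Sum.inl x else Sum.inr ⟨x, h⟩

/-- The edges of the twin network `G^t` of the base network `E`. -/
def twinEdge (E : V → V → Prop) (a b : TwinVar E) : Prop :=
  match a, b with
  | Sum.inl p, Sum.inl x => E p x
  | Sum.inl p, Sum.inr x => isRoot E p ∧ E p x.1
  | Sum.inr p, Sum.inr x => E p.1 x.1
  | Sum.inr _, Sum.inl _ => False

/-- The twin elimination order: replace each non-root variable `X` of `π`
by the two consecutive variables `X, X'`. -/
def twinOrder (E : V → V → Prop) (π : List V) : List (TwinVar E) :=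
  π.foldr (fun x acc =>
    (if h : isRoot E x then [Sum.inl x] else [Sum.inl x, Sum.inr ⟨x, h⟩]) ++ acc) []

/-- Eliminate the pair `{X, X'}` (a single variable when `X` is a root) from a graph
on the twin variables. -/
def elimTwinPair (E : V → V → Prop) (G : SimpleGraph (TwinVar E)) (x : V) :
    SimpleGraph (TwinVar E) :=
  if h : isRoot E x then eliminate G (Sum.inl x)
  else eliminate (eliminate G (Sum.inl x)) (Sum.inr ⟨x, h⟩)

/-- The twin graph sequence: `twinGraphAt E π i` is the graph obtained from the moral graph
of the twin network after eliminating the pairs `{π 0, (π 0)'}, …` for the first `i`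
variables of `π`. -/
def twinGraphAt (E : V → V → Prop) (π : List V) (i : ℕ) : SimpleGraph (TwinVar E) :=
  (π.take i).foldl (elimTwinPair E) (moralGraph (twinEdge E))

/-- The cluster of twin variable `Y` in the elimination process on the moral graph of the
twin network induced by the twin elimination order. -/
def twinClusterOf (E : V → V → Prop) (π : List V) (Y : TwinVar E) : Set (TwinVar E) :=
  clusterOf (twinEdge E) (twinOrder E π) Y

/-! ### Jointrees -/

/-- A leaf of a tree: a node with exactly one neighbor. -/
def IsLeaf {J : Type v} (T : SimpleGraph J) (j : J) : Prop := ∃! k, T.Adj j k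

/-- A jointree for the DAG `E`: a tree `T` together with a host function `H` mapping
(the index `X` of) each family of `E` to a nonempty set of hosting nodes; only leaves
may be hosts and each leaf hosts exactly one family. -/
structure Jointree (E : V → V → Prop) (J : Type v) where
  T : SimpleGraph J
  isTree : T.IsTree
  H : V → Set J
  hosts_nonempty : ∀ X : V, (H X).Nonempty
  hosts_leaf : ∀ (X : V) (j : J), j ∈ H X → IsLeaf T j
  leaf_host : ∀ j : J, IsLeaf T j → ∃! X : V, j ∈ H X

variable {E : V → V → Prop} {J : Type v}

/-- The variables appearing (in a family hosted by a leaf) on the `i`-side of the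
tree edge `(i, j)`. -/
def sideVars (jt : Jointree E J) (i j : J) : Set V :=
  {X | ∃ (Y : V) (l : J), l ∈ jt.H Y ∧ X ∈ famOf E Y ∧
    (jt.T.deleteEdges {s(i, j)}).Reachable i l}

/-- The separator of the tree edge `(i, j)`: the variables hosted on both sides. -/
def sepOf (jt : Jointree E J) (i j : J) : Set V :=
  sideVars jt i j ∩ sideVars jt j i

/-- The cluster of a jointree node: for a leaf, the family it hosts; for an internal
node, the union of the separators of its adjacent edges. -/
def clusterJT (jt : Jointree E J) (i : J) : Set V :=
  if IsLeaf jt.T i then ⋃ X ∈ {Y : V | i ∈ jt.H Y}, famOf E X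
  else ⋃ j ∈ {j : J | jt.T.Adj i j}, sepOf jt i j

/-- The width of a jointree: the size of its largest cluster minus one. -/
def widthJT (jt : Jointree E J) : ℕ := (⨆ i : J, (clusterJT jt i).ncard) - 1

/-- `l` is at or below `u` in the tree `T` rooted at `r`: `u` lies on every
(equivalently, on the unique) path from `r` to `l`. -/
def Below {J : Type v} (T : SimpleGraph J) (r u l : J) : Prop :=
  ∀ p : T.Walk r l, p.IsPath → u ∈ p.support

/-- Node `u` of the jointree is duplicated by Algorithm 1 (with root `r`): every leaf at
or below `u` hosts only families of internal variables. -/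
def Duplicated (jt : Jointree E J) (r u : J) : Prop :=
  ∀ l : J, IsLeaf jt.T l → Below jt.T r u l → ∀ X : V, l ∈ jt.H X → ¬ isRoot E X

/-- The nodes of the twin jointree produced by Algorithm 1: the original nodes
(`Sum.inl`) plus a duplicate (`Sum.inr`) of every duplicated node. -/
abbrev TwinJ (jt : Jointree E J) (r : J) := J ⊕ {u : J // Duplicated jt r u}

/-- Adjacency of the twin jointree produced by Algorithm 1: the original tree edges,
the duplicates of the duplicated edges, and the edges attaching the roots of the
duplicate subtrees to the parents of the corresponding duplicated subtree roots. -/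
def twinTAdj (jt : Jointree E J) (r : J) : TwinJ jt r → TwinJ jt r → Prop
  | Sum.inl i, Sum.inl j => jt.T.Adj i j
  | Sum.inl i, Sum.inr v => jt.T.Adj i v.1 ∧ ¬ Duplicated jt r i
  | Sum.inr u, Sum.inl j => jt.T.Adj u.1 j ∧ ¬ Duplicated jt r j
  | Sum.inr u, Sum.inr v => jt.T.Adj u.1 v.1

/-- The tree of the twin jointree produced by Algorithm 1. -/
def twinT (jt : Jointree E J) (r : J) : SimpleGraph (TwinJ jt r) where
  Adj := twinTAdj jt r
  symm := by
    refine ⟨?_⟩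
    rintro (i | u) (j | v) h <;> simp only [twinTAdj] at h ⊢
    · exact h.symm
    · exact ⟨h.1.symm, h.2⟩
    · exact ⟨h.1.symm, h.2⟩
    · exact h.symm
  loopless := by
    refine ⟨?_⟩
    rintro (i | u) h <;> simp only [twinTAdj] at h
    · exact h.ne rfl
    · exact h.ne rfl

/-- The host function of the twin jointree produced by Algorithm 1: a base family is
hosted by the original hosts of the corresponding base family, and a duplicate family is
hosted by the duplicates of the hosts of the corresponding base family. -/
def twinH (jt : Jointree E J) (r : J) : TwinVar E → Set (TwinJ jt r) :=
  fun a =>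
    match a with
    | Sum.inl X => Sum.inl '' jt.H X
    | Sum.inr x => {b | ∃ (l : J) (hl : Duplicated jt r l),
        l ∈ jt.H x.1 ∧ b = Sum.inr ⟨l, hl⟩}

/-- The copy of jointree node `i` on the duplicate side: its duplicate if `i` is
duplicated, and `i` itself otherwise. -/
def dupJ (jt : Jointree E J) (r i : J) : TwinJ jt r :=
  if h : Duplicated jt r i then Sum.inr ⟨i, h⟩ else Sum.inl i

/-! ### Thinning -/

/-- Thinning rule 1 for removing the functional variable `X` from the separator of
edge `(i,j)`: the edge lies on a path between two leaves hosting the family of `X`,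
and every separator on this path contains `X`. -/
def Rule1 (jt : Jointree E J) (S : J → J → Set V) (i j : J) (X : V) : Prop :=
  ∃ (l m : J) (p : jt.T.Walk l m), p.IsPath ∧ l ∈ jt.H X ∧ m ∈ jt.H X ∧
    s(i, j) ∈ p.edges ∧ ∀ a b : J, s(a, b) ∈ p.edges → X ∈ S a b

/-- Thinning rule 2 for removing the variable `X` from the separator of edge `(i,j)`:
no other separator adjacent to `i` contains `X`, or no other separator adjacent to `j`
contains `X`. -/
def Rule2 (jt : Jointree E J) (S : J → J → Set V) (i j : J) (X : V) : Prop :=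
  (∀ k : J, jt.T.Adj i k → k ≠ j → X ∉ S i k) ∨
  (∀ k : J, jt.T.Adj j k → k ≠ i → X ∉ S j k)

/-- One valid thinning step on a separator assignment: remove a functional
(here: internal, as in an SCM) variable `X` from the separator of an edge `(i,j)`,
as licensed by one of the two thinning rules. -/
def ThinStep (jt : Jointree E J) (S S' : J → J → Set V) : Prop :=
  ∃ (i j : J) (X : V), jt.T.Adj i j ∧ ¬ isRoot E X ∧ X ∈ S i j ∧
    (Rule1 jt S i j X ∨ Rule2 jt S i j X) ∧
    S' = fun a b => if (a = i ∧ b = j) ∨ (a = j ∧ b = i) then S a b \ {X} else S a b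

/-- `S` is the separator assignment of a thinned jointree obtained from `jt`:
it is reachable from the separators of `jt` by valid thinning steps, applied
to exhaustion. -/
def IsThinning (jt : Jointree E J) (S : J → J → Set V) : Prop :=
  Relation.ReflTransGen (ThinStep jt) (fun i j => sepOf jt i j) S ∧
    ∀ S', ¬ ThinStep jt S S'

/-- The cluster of a node of a thinned jointree with separator assignment `S`. -/
def thClusterJT (jt : Jointree E J) (S : J → J → Set V) (i : J) : Set V :=
  if IsLeaf jt.T i then ⋃ X ∈ {Y : V | i ∈ jt.H Y}, famOf E X
  else ⋃ j ∈ {j : J | jt.T.Adj i j}, S i j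

/-- The width of a thinned jointree with separator assignment `S`. -/
def thWidthJT (jt : Jointree E J) (S : J → J → Set V) : ℕ :=
  (⨆ i : J, (thClusterJT jt S i).ncard) - 1

/-- The causal treewidth of the DAG `E` whose internal variables are all functional:
the minimum width attained by a thinned jointree for `E`. -/
def causalTreewidth (E : V → V → Prop) : ℕ :=
  sInf {w : ℕ | ∃ (J : Type u) (_ : Finite J) (jt : Jointree E J) (S : J → J → Set V),
    IsThinning jt S ∧ thWidthJT jt S = w}

/-- The thinned separator assignment for the twin jointree produced by Algorithm 1,
obtained from a thinned separator assignment `S` of the base jointree: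
`S^t = S` on duplicated edges, `S^t = S'` on duplicate edges, and
`S^t = S ∪ S'` on invariant edges. -/
def twinSep (jt : Jointree E J) (r : J) (S : J → J → Set V) :
    TwinJ jt r → TwinJ jt r → Set (TwinVar E)
  | Sum.inl i, Sum.inl j =>
      if Duplicated jt r i ∨ Duplicated jt r j then Sum.inl '' S i j
      else Sum.inl '' S i j ∪ twinDup E '' S i j
  | Sum.inl i, Sum.inr v => twinDup E '' S i v.1
  | Sum.inr u, Sum.inl j => twinDup E '' S u.1 j
  | Sum.inr u, Sum.inr v => twinDup E '' S u.1 v.1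

/-! ### N-world networks -/

/-- The variables of the `N`-world network of a base network with variables `V`,
with respect to a set `R` of roots: the variables in `R` (`Sum.inl`) stay unreplicated,
and each variable outside `R` is replaced by `N` duplicates (`Sum.inr`). -/
abbrev NVar (R : Set V) (N : ℕ) : Type u := {x : V // x ∈ R} ⊕ ({x : V // x ∉ R} × Fin N)

/-- The `k`-th duplicate `X^k` of variable `X`; by convention `X^k = X` when `X ∈ R`. -/
def ndup (R : Set V) (N : ℕ) (x : V) (k : Fin N) : NVar R N :=
  if h : x ∈ R then Sum.inl ⟨x, h⟩ else Sum.inr (⟨x, h⟩, k)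

/-- The edges of the `N`-world network `G^N` of the base network `E` with respect to the
set of roots `R`: a parent `P ∈ R` of `X` is a parent of every duplicate `X^k`, while a
parent `P ∉ R` of `X` yields the edges `P^k → X^k`. -/
def nEdge (E : V → V → Prop) (R : Set V) (N : ℕ) (a b : NVar R N) : Prop :=
  match a, b with
  | Sum.inl p, Sum.inr x => E p.1 x.1.1
  | Sum.inr p, Sum.inr x => E p.1.1 x.1.1 ∧ p.2 = x.2
  | _, _ => False

/-- Eliminate all `N` duplicates `x^1, …, x^N` of `x` (a single variable when `x ∈ R`). -/
def elimNBlock (R : Set V) (N : ℕ) (G : SimpleGraph (NVar R N)) (x : V) :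
    SimpleGraph (NVar R N) :=
  if h : x ∈ R then eliminate G (Sum.inl ⟨x, h⟩)
  else (List.ofFn (fun k : Fin N => (Sum.inr (⟨x, h⟩, k) : NVar R N))).foldl eliminate G

/-- The `N`-world elimination order obtained from `π`: replace each variable `x ∉ R`
by its `N` duplicates `x^1, …, x^N`. -/
def nOrder (R : Set V) (N : ℕ) (π : List V) : List (NVar R N) :=
  π.foldr (fun x acc =>
    (if h : x ∈ R then [(Sum.inl ⟨x, h⟩ : NVar R N)]
     else List.ofFn (fun k : Fin N => (Sum.inr (⟨x, h⟩, k) : NVar R N))) ++ acc) []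

/-! ### Generalized N-world networks -/

/-- The variables of a generalized `N`-world network: nodes outside the duplicated set `D`
stay unreplicated, and each node in `D` is replaced by `N` duplicates. -/
abbrev GNVar (D : Set V) (N : ℕ) : Type u := {x : V // x ∉ D} ⊕ ({x : V // x ∈ D} × Fin N)

/-- The edges of a generalized `N`-world network of the base network `E` with respect to
the duplicated set `D` and the optional extra edges `ex` between duplicates (an edge from
`X^i` to `X^j` is added when `i < j` and `ex X i j` holds). -/
def gnEdge (E : V → V → Prop) (D : Set V) (N : ℕ) (ex : V → Fin N → Fin N → Prop)
    (a b : GNVar D N) : Prop :=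
  match a, b with
  | Sum.inl p, Sum.inl x => E p.1 x.1
  | Sum.inl p, Sum.inr x => E p.1 x.1.1
  | Sum.inr p, Sum.inr x =>
      (E p.1.1 x.1.1 ∧ p.2 = x.2) ∨ (p.1.1 = x.1.1 ∧ p.2 < x.2 ∧ ex x.1.1 p.2 x.2)
  | Sum.inr _, Sum.inl _ => False


/-- The `N`-world graph sequence: the graph obtained from the moral graph of the
`N`-world network after eliminating all duplicates of the first `i` variables of `π`. -/
def nGraphAt (E : V → V → Prop) (R : Set V) (N : ℕ) (π : List V) (i : ℕ) :
    SimpleGraph (NVar R N) :=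
  (π.take i).foldl (elimNBlock R N) (moralGraph (nEdge E R N))

/-- The cluster of an `N`-world variable `Y` in the elimination process on the moral
graph of the `N`-world network induced by the `N`-world elimination order. -/
def nClusterOf (E : V → V → Prop) (R : Set V) (N : ℕ) (π : List V) (Y : NVar R N) :
    Set (NVar R N) :=
  clusterOf (nEdge E R N) (nOrder R N π) Y

end
attribute [local instance] Classical.propDecidable

open SimpleGraph

universe v
variable {J : Type v}

/-- One step of reachability in a delete-edges graph. -/
private lemma adj_del {G : SimpleGraph J} {s : Set (Sym2 J)} {u c : J}
    (h : G.Adj u c) (hne : s(u, c) ∉ s) : (G.deleteEdges s).Adj u c := by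
  rw [SimpleGraph.deleteEdges_adj]; exact ⟨h, hne⟩

/-- Walk version of the two-components lemma. -/
private lemma two_comp_walk {G : SimpleGraph J} (x y : J) :
    ∀ {u z : J}, G.Walk u z →
      (G.deleteEdges {s(x, y)}).Reachable u z ∨
      (G.deleteEdges {s(x, y)}).Reachable x z ∨
      (G.deleteEdges {s(x, y)}).Reachable y z := by
  intro u z w
  induction w with
  | nil => exact Or.inl (Reachable.refl _)
  | @cons a b c hadj w ih =>
    by_cases he : s(a, b) = s(x, y)
    · rcases ih with h1 | h1 | h1
      · rw [Sym2.eq_iff] at he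
        rcases he with ⟨rfl, rfl⟩ | ⟨rfl, rfl⟩
        · exact Or.inr (Or.inr h1)
        · exact Or.inr (Or.inl h1)
      · exact Or.inr (Or.inl h1)
      · exact Or.inr (Or.inr h1)
    · have step : (G.deleteEdges {s(x, y)}).Reachable a b :=
        (adj_del hadj (by simpa using he)).reachable
      rcases ih with h1 | h1 | h1
      · exact Or.inl (step.trans h1)
      · exact Or.inr (Or.inl h1)
      · exact Or.inr (Or.inr h1)

/-- In a connected graph, after deleting one edge every vertex is reachable from
one of its endpoints. -/
lemma two_comp {G : SimpleGraph J} (hc : G.Connected) (x y z : J) :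
    (G.deleteEdges {s(x, y)}).Reachable x z ∨ (G.deleteEdges {s(x, y)}).Reachable y z := by
  obtain ⟨w⟩ := hc.preconnected x z
  rcases two_comp_walk x y w with h | h | h
  · exact Or.inl h
  · exact Or.inl h
  · exact Or.inr h

/-- In a tree, the endpoints of an edge are not reachable from each other after the
edge is deleted. -/
lemma tree_split {G : SimpleGraph J} (ht : G.IsTree) {x y : J} (hadj : G.Adj x y) :
    ¬ (G.deleteEdges {s(x, y)}).Reachable x y := by
  intro hr
  obtain ⟨w⟩ := hr
  classical
  let w' : G.Walk x y := w.map (Hom.ofLE (deleteEdges_le _))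
  have hedge : s(x, y) ∉ w'.edges := by
    intro hmem
    have hsub : w'.edges = w.edges.map (Sym2.map id) := Walk.edges_map _ w
    rw [hsub] at hmem
    simp only [Sym2.map_id, List.map_id] at hmem
    have := w.edges_subset_edgeSet hmem
    rw [SimpleGraph.edgeSet_deleteEdges] at this
    simp at this
  have hne : s(x, y) ∉ (w'.toPath : G.Walk x y).edges := fun h => hedge (w'.edges_toPath_subset h)
  have huniq := SimpleGraph.isAcyclic_iff_path_unique.mp ht.IsAcyclic
  have : w'.toPath = SimpleGraph.Path.singleton hadj := huniq _ _
  rw [this] at hne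
  apply hne
  simp [SimpleGraph.Path.singleton]

/-- If two vertices are reachable after deleting a set of edges, then after also deleting
the edge `s(x,y)` they are still connected, possibly through the endpoints of that edge. -/
lemma bridge {G : SimpleGraph J} {s : Set (Sym2 J)} (x y : J) {c l : J}
    (h : (G.deleteEdges s).Reachable c l) :
    (G.deleteEdges (insert s(x, y) s)).Reachable c l ∨
    ((G.deleteEdges (insert s(x, y) s)).Reachable c x ∧
      (G.deleteEdges (insert s(x, y) s)).Reachable y l) ∨
    ((G.deleteEdges (insert s(x, y) s)).Reachable c y ∧
      (G.deleteEdges (insert s(x, y) s)).Reachable x l) := by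
  obtain ⟨w⟩ := h
  induction w with
  | nil => exact Or.inl (Reachable.refl _)
  | @cons a b c' hadj w ih =>
    rw [SimpleGraph.deleteEdges_adj] at hadj
    by_cases he : s(a, b) = s(x, y)
    · rw [Sym2.eq_iff] at he
      rcases ih with h1 | ⟨h1, h2⟩ | ⟨h1, h2⟩
      · rcases he with ⟨rfl, rfl⟩ | ⟨rfl, rfl⟩
        · exact Or.inr (Or.inl ⟨Reachable.refl _, h1⟩)
        · exact Or.inr (Or.inr ⟨Reachable.refl _, h1⟩)
      · rcases he with ⟨rfl, rfl⟩ | ⟨rfl, rfl⟩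
        · exact Or.inr (Or.inl ⟨Reachable.refl _, h2⟩)
        · exact Or.inl h2
      · rcases he with ⟨rfl, rfl⟩ | ⟨rfl, rfl⟩
        · exact Or.inl h2
        · exact Or.inr (Or.inr ⟨Reachable.refl _, h2⟩)
    · have step : (G.deleteEdges (insert s(x, y) s)).Reachable a b := by
        refine (adj_del hadj.1 ?_).reachable
        simp only [Set.mem_insert_iff]
        push_neg
        exact ⟨he, hadj.2⟩
      rcases ih with h1 | ⟨h1, h2⟩ | ⟨h1, h2⟩
      · exact Or.inl (step.trans h1)
      · exact Or.inr (Or.inl ⟨step.trans h1, h2⟩)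
      · exact Or.inr (Or.inr ⟨step.trans h1, h2⟩)


section TwinAux

variable {V : Type u} {J : Type v} {E : V → V → Prop}

/-- Projection of twin jointree nodes to base jointree nodes. -/
def qJ (jt : Jointree E J) (r : J) : TwinJ jt r → J := Sum.elim id Subtype.val

/-- Projection of twin variables to base variables. -/
def pV (E : V → V → Prop) : TwinVar E → V := Sum.elim id Subtype.val

lemma proj_adj {jt : Jointree E J} {r : J} {x y : TwinJ jt r} (h : twinTAdj jt r x y) :
    jt.T.Adj (qJ jt r x) (qJ jt r y) := by
  rcases x with i | u <;> rcases y with j | v <;> simp only [twinTAdj] at h <;>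
    first
      | exact h
      | exact h.1
      | exact h.elim

lemma lift_char {jt : Jointree E J} {r : J} {x y : TwinJ jt r} {i j : J}
    (h : twinTAdj jt r x y) (he : s(qJ jt r x, qJ jt r y) = s(i, j)) :
    s(x, y) = s(Sum.inl i, Sum.inl j) ∨
    (∃ (hi : Duplicated jt r i) (hj : Duplicated jt r j),
      s(x, y) = s(Sum.inr ⟨i, hi⟩, Sum.inr ⟨j, hj⟩)) ∨
    (∃ (hj : Duplicated jt r j), ¬ Duplicated jt r i ∧
      s(x, y) = s(Sum.inl i, Sum.inr ⟨j, hj⟩)) ∨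
    (∃ (hi : Duplicated jt r i), ¬ Duplicated jt r j ∧
      s(x, y) = s(Sum.inr ⟨i, hi⟩, Sum.inl j)) := by
  rw [Sym2.eq_iff] at he
  rcases x with cx | ⟨ux, hux⟩ <;> rcases y with cy | ⟨uy, huy⟩ <;>
    simp only [qJ, Sum.elim_inl, Sum.elim_inr, twinTAdj] at h he
  · rcases he with ⟨rfl, rfl⟩ | ⟨rfl, rfl⟩
    · exact Or.inl rfl
    · exact Or.inl Sym2.eq_swap
  · rcases he with ⟨rfl, rfl⟩ | ⟨rfl, rfl⟩
    · exact Or.inr (Or.inr (Or.inl ⟨huy, h.2, rfl⟩))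
    · exact Or.inr (Or.inr (Or.inr ⟨huy, h.2, Sym2.eq_swap⟩))
  · rcases he with ⟨rfl, rfl⟩ | ⟨rfl, rfl⟩
    · exact Or.inr (Or.inr (Or.inr ⟨hux, h.2, rfl⟩))
    · exact Or.inr (Or.inr (Or.inl ⟨hux, h.2, Sym2.eq_swap⟩))
  · rcases he with ⟨rfl, rfl⟩ | ⟨rfl, rfl⟩
    · exact Or.inr (Or.inl ⟨hux, huy, rfl⟩)
    · exact Or.inr (Or.inl ⟨huy, hux, Sym2.eq_swap⟩)

/-- The subgraph of the base tree induced by duplicated nodes, avoiding the edge `e`. -/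
def TD (jt : Jointree E J) (r : J) (e : Sym2 J) : SimpleGraph J where
  Adj u v := jt.T.Adj u v ∧ Duplicated jt r u ∧ Duplicated jt r v ∧ s(u, v) ≠ e
  symm := by
    refine ⟨?_⟩
    rintro u v ⟨h1, h2, h3, h4⟩
    exact ⟨h1.symm, h3, h2, by rw [Sym2.eq_swap]; exact h4⟩
  loopless := ⟨fun u h => jt.T.loopless.irrefl u h.1⟩

lemma td_reach_mono {jt : Jointree E J} {r : J} {e : Sym2 J} {u v : J}
    (h : (TD jt r e).Reachable u v) : (jt.T.deleteEdges {e}).Reachable u v := by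
  refine h.map ⟨id, fun {a b} hab => ?_⟩
  rw [SimpleGraph.deleteEdges_adj]
  have hab : jt.T.Adj a b ∧ Duplicated jt r a ∧ Duplicated jt r b ∧ s(a, b) ≠ e := hab
  exact ⟨hab.1, by simpa using hab.2.2.2⟩

lemma hom_reach {jt : Jointree E J} {r : J} {S : Set (Sym2 (TwinJ jt r))} {e : Sym2 J}
    (HP : ∀ x y : TwinJ jt r, ((twinT jt r).deleteEdges S).Adj x y →
      s(qJ jt r x, qJ jt r y) ≠ e)
    {x y : TwinJ jt r} (h : ((twinT jt r).deleteEdges S).Reachable x y) :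
    (jt.T.deleteEdges {e}).Reachable (qJ jt r x) (qJ jt r y) := by
  refine h.map ⟨qJ jt r, fun {a b} hab => ?_⟩
  rw [SimpleGraph.deleteEdges_adj]
  have htw : twinTAdj jt r a b := ((SimpleGraph.deleteEdges_adj).mp hab).1
  exact ⟨proj_adj htw, by simpa using HP a b hab⟩

end TwinAux

section TwinAux2

variable {V : Type u} {J : Type v} {E : V → V → Prop}

lemma dup_nbr (jt : Jointree E J) (r : J) (ht : jt.T.IsTree) {u w : J}
    (hDu : Duplicated jt r u) (hadj : jt.T.Adj u w) (hnw : ¬ Duplicated jt r w) :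
    ¬ (jt.T.deleteEdges {s(u, w)}).Reachable u r := by
  intro hr
  apply hnw
  intro l hleaf hbel X hX
  refine hDu l hleaf ?_ X hX
  intro π hπ
  have hw : w ∈ π.support := hbel π hπ
  by_contra hu
  have hnedge : s(u, w) ∉ π.edges := fun hmem => hu (π.fst_mem_support_of_mem_edges hmem)
  have hrw : (jt.T.deleteEdges {s(u, w)}).Reachable r w := by
    refine ⟨(π.takeUntil w hw).toDeleteEdges _ ?_⟩
    intro e' he'
    simp only [Set.mem_singleton_iff]
    rintro rfl
    exact hnedge (π.edges_takeUntil_subset hw he')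
  exact tree_split ht hadj (hr.trans hrw)

lemma comp_dup (jt : Jointree E J) (r : J) (ht : jt.T.IsTree) {i j : J}
    (hadj : jt.T.Adj i j) (hir : (jt.T.deleteEdges {s(i, j)}).Reachable i r)
    (hDj : Duplicated jt r j) :
    ∀ y, (jt.T.deleteEdges {s(i, j)}).Reachable j y → Duplicated jt r y := by
  intro y hy l hleaf hbel X hX
  refine hDj l hleaf ?_ X hX
  intro π hπ
  have hys : y ∈ π.support := hbel π hπ
  by_contra hj
  have hnedge : s(i, j) ∉ π.edges := fun hmem => hj (π.snd_mem_support_of_mem_edges hmem)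
  have hry : (jt.T.deleteEdges {s(i, j)}).Reachable r y := by
    refine ⟨(π.takeUntil y hys).toDeleteEdges _ ?_⟩
    intro e' he'
    simp only [Set.mem_singleton_iff]
    rintro rfl
    exact hnedge (π.edges_takeUntil_subset hys he')
  exact tree_split ht hadj ((hir.trans hry).trans hy.symm)

lemma root_host (jt : Jointree E J) (r : J) {W : V} (hW : isRoot E W) {u : J}
    (hDu : Duplicated jt r u) :
    ∃ lP, lP ∈ jt.H W ∧ ∃ π : jt.T.Walk r lP, π.IsPath ∧ u ∉ π.support := by
  obtain ⟨lP, hlP⟩ := jt.hosts_nonempty W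
  have hleaf := jt.hosts_leaf W lP hlP
  have hnb : ¬ Below jt.T r u lP := fun hbel => hDu lP hleaf hbel W hlP hW
  unfold Below at hnb
  push_neg at hnb
  obtain ⟨π, hπ, hu⟩ := hnb
  exact ⟨lP, hlP, π, hπ, hu⟩

lemma wcross (jt : Jointree E J) (r : J) {S : Set (Sym2 (TwinJ jt r))} {e : Sym2 J}
    (HP : ∀ x y : TwinJ jt r, ((twinT jt r).deleteEdges S).Adj x y →
      s(qJ jt r x, qJ jt r y) ≠ e)
    {x c : TwinJ jt r} (w : ((twinT jt r).deleteEdges S).Walk x c)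
    (u : {u : J // Duplicated jt r u}) (hc : c = Sum.inr u) :
    (∃ (v : J) (hv : Duplicated jt r v), x = Sum.inr ⟨v, hv⟩ ∧ (TD jt r e).Reachable v u.1) ∨
    (∃ w' u' : J, ¬ Duplicated jt r w' ∧ jt.T.Adj u' w' ∧ s(u', w') ≠ e ∧
      Duplicated jt r u' ∧ (TD jt r e).Reachable u' u.1 ∧
      ((twinT jt r).deleteEdges S).Reachable x (Sum.inl w')) := by
  induction w with
  | nil =>
    subst hc
    exact Or.inl ⟨u.1, u.2, rfl, Reachable.refl _⟩
  | @cons a b c' hadj w ih =>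
    rcases ih hc with ⟨v, hv, rfl, hre⟩ | ⟨w', u', h1, h2, h3, h4, h5, h6⟩
    · have htw : twinTAdj jt r a (Sum.inr ⟨v, hv⟩) := ((SimpleGraph.deleteEdges_adj).mp hadj).1
      have hqne : s(qJ jt r a, qJ jt r (Sum.inr ⟨v, hv⟩)) ≠ e := HP _ _ hadj
      rcases a with w0 | v0
      · simp only [twinTAdj] at htw
        refine Or.inr ⟨w0, v, htw.2, htw.1.symm, ?_, hv, hre, Reachable.refl _⟩
        rw [Sym2.eq_swap]
        exact hqne
      · simp only [twinTAdj] at htw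
        have hTD : (TD jt r e).Adj v0.1 v := (⟨htw, v0.2, hv, hqne⟩ :
          jt.T.Adj v0.1 v ∧ Duplicated jt r v0.1 ∧ Duplicated jt r v ∧ s(v0.1, v) ≠ e)
        exact Or.inl ⟨v0.1, v0.2, rfl, hTD.reachable.trans hre⟩
    · exact Or.inr ⟨w', u', h1, h2, h3, h4, h5, hadj.reachable.trans h6⟩

lemma wpos_a (jt : Jointree E J) (r : J) {S : Set (Sym2 (TwinJ jt r))} {e : Sym2 J} {sn : J}
    (HP : ∀ x y : TwinJ jt r, ((twinT jt r).deleteEdges S).Adj x y →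
      s(qJ jt r x, qJ jt r y) ≠ e)
    (hs : ∀ y, (jt.T.deleteEdges {e}).Reachable sn y → Duplicated jt r y)
    {z l' : TwinJ jt r} (hzl : ((twinT jt r).deleteEdges S).Reachable z l')
    (hz : (jt.T.deleteEdges {e}).Reachable sn (qJ jt r z)) :
    (jt.T.deleteEdges {e}).Reachable sn (qJ jt r l') ∧ z.isLeft = l'.isLeft := by
  rcases hl' : l' with m | m <;> rcases hz' : z with cz | vz
  · subst hl' hz'
    exact ⟨hz.trans (hom_reach HP hzl), rfl⟩
  · subst hl' hz'
    exact ⟨hz.trans (hom_reach HP hzl), by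
      obtain ⟨wk⟩ := hzl.symm
      rcases wcross jt r HP wk vz rfl with ⟨v, hv, heq, hre⟩ | ⟨w', u', h1, h2, h3, h4, h5, h6⟩
      · exact absurd heq (by simp)
      · exfalso
        have hsu : (jt.T.deleteEdges {e}).Reachable sn u' := hz.trans (td_reach_mono h5).symm
        have hsw : (jt.T.deleteEdges {e}).Reachable sn w' := by
          refine hsu.trans (SimpleGraph.Adj.reachable ?_)
          rw [SimpleGraph.deleteEdges_adj]
          exact ⟨h2, by simpa using h3⟩
        exact h1 (hs _ hsw)⟩
  · subst hl' hz'
    exfalso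
    obtain ⟨wk⟩ := hzl
    rcases wcross jt r HP wk m rfl with ⟨v, hv, heq, hre⟩ | ⟨w', u', h1, h2, h3, h4, h5, h6⟩
    · exact absurd heq (by simp)
    · have hcw : (jt.T.deleteEdges {e}).Reachable sn w' := hz.trans (hom_reach HP h6)
      exact h1 (hs _ hcw)
  · subst hl' hz'
    obtain ⟨wk⟩ := hzl.symm
    rcases wcross jt r HP wk vz rfl with ⟨v, hv, heq, hre⟩ | ⟨w', u', h1, h2, h3, h4, h5, h6⟩
    · obtain rfl : m = ⟨v, hv⟩ := by simpa using heq
      exact ⟨hz.trans (td_reach_mono hre).symm, rfl⟩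
    · exfalso
      have hsu : (jt.T.deleteEdges {e}).Reachable sn u' := hz.trans (td_reach_mono h5).symm
      have hsw : (jt.T.deleteEdges {e}).Reachable sn w' := by
        refine hsu.trans (SimpleGraph.Adj.reachable ?_)
        rw [SimpleGraph.deleteEdges_adj]
        exact ⟨h2, by simpa using h3⟩
      exact h1 (hs _ hsw)

lemma wpos_b (jt : Jointree E J) (r : J) {S : Set (Sym2 (TwinJ jt r))} {e : Sym2 J} {sn : J}
    (HP : ∀ x y : TwinJ jt r, ((twinT jt r).deleteEdges S).Adj x y →
      s(qJ jt r x, qJ jt r y) ≠ e)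
    (hs : ∀ y, (jt.T.deleteEdges {e}).Reachable sn y → Duplicated jt r y)
    {z l' : TwinJ jt r} (hzl : ((twinT jt r).deleteEdges S).Reachable z l')
    (hz : ¬ (jt.T.deleteEdges {e}).Reachable sn (qJ jt r z)) :
    ¬ (jt.T.deleteEdges {e}).Reachable sn (qJ jt r l') := by
  intro hl
  exact hz (wpos_a jt r HP hs hzl.symm hl).1

end TwinAux2

section TwinAux3

variable {V : Type u} {J : Type v} {E : V → V → Prop}

lemma host_shape {jt : Jointree E J} {r : J} {Y : TwinVar E} {l' : TwinJ jt r}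
    (hl : l' ∈ twinH jt r Y) {Z : TwinVar E} (hZ : Z ∈ famOf (twinEdge E) Y) :
    qJ jt r l' ∈ jt.H (pV E Y) ∧ pV E Z ∈ famOf E (pV E Y) ∧ Y.isLeft = l'.isLeft := by
  rcases Y with X | x
  · obtain ⟨m, hm, rfl⟩ := hl
    refine ⟨hm, ?_, rfl⟩
    rcases Set.mem_insert_iff.mp hZ with rfl | hZ
    · exact Set.mem_insert _ _
    · rcases Z with P | q
      · exact Set.mem_insert_iff.mpr (Or.inr hZ)
      · exact (hZ : False).elim
  · obtain ⟨m, hm0, hm, rfl⟩ := hl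
    refine ⟨hm, ?_, rfl⟩
    rcases Set.mem_insert_iff.mp hZ with rfl | hZ
    · exact Set.mem_insert _ _
    · rcases Z with P | q
      · exact Set.mem_insert_iff.mpr (Or.inr hZ.2)
      · exact Set.mem_insert_iff.mpr (Or.inr hZ)

lemma fam_isLeft {Y Z : TwinVar E} (hZ : Z ∈ famOf (twinEdge E) Y)
    (hY : Y.isLeft = true) : Z.isLeft = true := by
  rcases Y with X | x
  · rcases Set.mem_insert_iff.mp hZ with rfl | hZ
    · rfl
    · rcases Z with P | q
      · rfl
      · exact (hZ : False).elim
  · simp at hY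

lemma fam_inr_root {x : {x : V // ¬ isRoot E x}} {Z : TwinVar E}
    (hZ : Z ∈ famOf (twinEdge E) (Sum.inr x)) (hZl : Z.isLeft = true) :
    isRoot E (pV E Z) := by
  rcases Set.mem_insert_iff.mp hZ with rfl | hZ
  · simp at hZl
  · rcases Z with P | q
    · exact hZ.1
    · simp at hZl

lemma mem_cluster (jt : Jointree E J) (ht : jt.T.IsTree) {i j : J} (hnl : ¬ IsLeaf jt.T i)
    (hadj : jt.T.Adj i j) {W : V} {mn mf : J} {Xn Xf : V}
    (hmn : mn ∈ jt.H Xn) (hWn : W ∈ famOf E Xn)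
    (hmf : mf ∈ jt.H Xf) (hWf : W ∈ famOf E Xf)
    (hRn : (jt.T.deleteEdges {s(i, j)}).Reachable i mn)
    (hRf : ¬ (jt.T.deleteEdges {s(i, j)}).Reachable i mf) :
    W ∈ clusterJT jt i := by
  rw [clusterJT, if_neg hnl]
  refine Set.mem_biUnion (show j ∈ {j | jt.T.Adj i j} from hadj) ?_
  refine ⟨⟨Xn, mn, hmn, hWn, hRn⟩, ⟨Xf, mf, hmf, hWf, ?_⟩⟩
  have h2 := (two_comp ht.isConnected i j mf).resolve_left hRf
  rw [show (s(j, i) : Sym2 J) = s(i, j) from Sym2.eq_swap]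
  exact h2

lemma nonleaf (jt : Jointree E J) (r : J)
    (h'leaf : ∀ (Y : TwinVar E) (c : TwinJ jt r), c ∈ twinH jt r Y →
      IsLeaf (twinT jt r) c)
    {a : TwinJ jt r} (hnl' : ¬ IsLeaf (twinT jt r) a) : ¬ IsLeaf jt.T (qJ jt r a) := by
  intro hleafB
  rcases a with m | ⟨u, hu⟩
  · obtain ⟨X, hX, -⟩ := jt.leaf_host m hleafB
    exact hnl' (h'leaf (Sum.inl X) (Sum.inl m) ⟨m, hX, rfl⟩)
  · apply hnl'
    obtain ⟨k, hk, huniq⟩ := hleafB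
    by_cases hDk : Duplicated jt r k
    · refine ⟨Sum.inr ⟨k, hDk⟩, hk, ?_⟩
      rintro (w | v) hc
      · have hc' : jt.T.Adj u w ∧ ¬ Duplicated jt r w := hc
        exact absurd hDk (huniq w hc'.1 ▸ hc'.2)
      · have hc' : jt.T.Adj u v.1 := hc
        exact congrArg Sum.inr (Subtype.ext (huniq v.1 hc'))
    · refine ⟨Sum.inl k, ⟨hk, hDk⟩, ?_⟩
      rintro (w | v) hc
      · have hc' : jt.T.Adj u w ∧ ¬ Duplicated jt r w := hc
        exact congrArg Sum.inl (huniq w hc'.1)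
      · have hc' : jt.T.Adj u v.1 := hc
        exact absurd (huniq v.1 hc' ▸ v.2) hDk

end TwinAux3

section TwinCore

variable {V : Type u} {J : Type v} {E : V → V → Prop}

lemma z_root {Y1 Y2 Z : TwinVar E} (hZ1 : Z ∈ famOf (twinEdge E) Y1)
    (hZ2 : Z ∈ famOf (twinEdge E) Y2) (hne : Y1.isLeft ≠ Y2.isLeft) :
    isRoot E (pV E Z) := by
  rcases Y1 with X1 | x1 <;> rcases Y2 with X2 | x2
  · exact absurd rfl hne
  · exact fam_inr_root hZ2 (fam_isLeft hZ1 rfl)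
  · exact fam_inr_root hZ1 (fam_isLeft hZ2 rfl)
  · exact absurd rfl hne

lemma root_reach (jt : Jointree E J) (r : J) {W : V} (hW : isRoot E W) {i j sn : J}
    (hD : Duplicated jt r sn) (hsn : sn = i ∨ sn = j) :
    ∃ lP, lP ∈ jt.H W ∧ (jt.T.deleteEdges {s(i, j)}).Reachable r lP := by
  obtain ⟨lP, hlP, π, hπ, hns⟩ := root_host jt r hW hD
  refine ⟨lP, hlP, ⟨π.toDeleteEdges _ ?_⟩⟩
  intro e' he'
  simp only [Set.mem_singleton_iff]
  rintro rfl
  rcases hsn with rfl | rfl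
  · exact hns (π.fst_mem_support_of_mem_edges he')
  · exact hns (π.snd_mem_support_of_mem_edges he')

lemma core (jt : Jointree E J) (r : J) (htB : jt.T.IsTree)
    {a b x₂ y₂ : TwinJ jt r} {i j : J}
    (hqa : qJ jt r a = i) (hqb : qJ jt r b = j)
    (hqx : qJ jt r x₂ = i) (hqy : qJ jt r y₂ = j)
    (hadjT : jt.T.Adj i j)
    (hnlT : ¬ IsLeaf jt.T i)
    (HP : ∀ x y : TwinJ jt r,
      ((twinT jt r).deleteEdges (insert s(x₂, y₂) {s(a, b)})).Adj x y →
      s(qJ jt r x, qJ jt r y) ≠ s(i, j))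
    (hF : ((jt.T.deleteEdges {s(i, j)}).Reachable i r ∧
            (∀ y, (jt.T.deleteEdges {s(i, j)}).Reachable j y → Duplicated jt r y) ∧
            y₂.isLeft ≠ b.isLeft) ∨
          ((jt.T.deleteEdges {s(i, j)}).Reachable j r ∧
            (∀ y, (jt.T.deleteEdges {s(i, j)}).Reachable i y → Duplicated jt r y) ∧
            x₂.isLeft ≠ a.isLeft))
    {Z Y1 Y2 : TwinVar E} {l1 l2 : TwinJ jt r}
    (hl1 : l1 ∈ twinH jt r Y1) (hZ1 : Z ∈ famOf (twinEdge E) Y1)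
    (hw1 : ((twinT jt r).deleteEdges {s(a, b)}).Reachable a l1)
    (hl2 : l2 ∈ twinH jt r Y2) (hZ2 : Z ∈ famOf (twinEdge E) Y2)
    (hw2 : ((twinT jt r).deleteEdges {s(a, b)}).Reachable b l2) :
    pV E Z ∈ clusterJT jt i := by
  have hnotij : ¬ (jt.T.deleteEdges {s(i, j)}).Reachable i j := tree_split htB hadjT
  obtain ⟨hq1, hf1, hil1⟩ := host_shape hl1 hZ1
  obtain ⟨hq2, hf2, hil2⟩ := host_shape hl2 hZ2
  rcases hF with ⟨hir, hsj, hcby⟩ | ⟨hjr, hsi, hcxa⟩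
  · -- F1 : the j-side is all duplicated, r is on the i-side
    have far2 : (jt.T.deleteEdges {s(i, j)}).Reachable j (qJ jt r l2) ∧
        b.isLeft = l2.isLeft := by
      rcases bridge x₂ y₂ hw2 with h2 | ⟨h2a, h2b⟩ | ⟨h2a, h2b⟩
      · exact wpos_a jt r HP hsj h2 (by rw [hqb])
      · exact absurd (by have := hom_reach HP h2a; rw [hqb, hqx] at this; exact this.symm)
          hnotij
      · exact absurd (wpos_a jt r HP hsj h2a (by rw [hqb])).2.symm hcby
    have hfar2' : ¬ (jt.T.deleteEdges {s(i, j)}).Reachable i (qJ jt r l2) :=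
      fun h => hnotij (h.trans far2.1.symm)
    rcases bridge x₂ y₂ hw1 with h1 | ⟨h1a, h1b⟩ | ⟨h1a, h1b⟩
    · have hn1 : ¬ (jt.T.deleteEdges {s(i, j)}).Reachable j (qJ jt r l1) :=
        wpos_b jt r HP hsj h1 (by rw [hqa]; exact fun h => hnotij h.symm)
      have near1 := (two_comp htB.isConnected i j (qJ jt r l1)).resolve_right hn1
      exact mem_cluster jt htB hnlT hadjT hq1 hf1 hq2 hf2 near1 hfar2'
    · have hfar1 := wpos_a jt r HP hsj h1b (by rw [hqy])
      have hYne : Y1.isLeft ≠ Y2.isLeft := by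
        intro hh
        apply hcby
        calc y₂.isLeft = l1.isLeft := hfar1.2
          _ = Y1.isLeft := hil1.symm
          _ = Y2.isLeft := hh
          _ = l2.isLeft := hil2
          _ = b.isLeft := far2.2.symm
      have hroot := z_root hZ1 hZ2 hYne
      obtain ⟨lP, hlP, hrP⟩ :=
        root_reach jt r hroot (hsj j (Reachable.refl _)) (Or.inr rfl : j = i ∨ j = j)
      have nearP : (jt.T.deleteEdges {s(i, j)}).Reachable i lP := hir.trans hrP
      exact mem_cluster jt htB hnlT hadjT hlP (Set.mem_insert _ _) hq2 hf2 nearP hfar2'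
    · exact absurd (by have := hom_reach HP h1a; rw [hqa, hqy] at this; exact this) hnotij
  · -- F2 : the i-side is all duplicated, r is on the j-side
    have near1 : (jt.T.deleteEdges {s(i, j)}).Reachable i (qJ jt r l1) ∧
        a.isLeft = l1.isLeft := by
      rcases bridge x₂ y₂ hw1 with h1 | ⟨h1a, h1b⟩ | ⟨h1a, h1b⟩
      · exact wpos_a jt r HP hsi h1 (by rw [hqa])
      · exact absurd (wpos_a jt r HP hsi h1a (by rw [hqa])).2.symm hcxa
      · exact absurd (by have := hom_reach HP h1a; rw [hqa, hqy] at this; exact this) hnotij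
    rcases bridge x₂ y₂ hw2 with h2 | ⟨h2a, h2b⟩ | ⟨h2a, h2b⟩
    · have far2 : ¬ (jt.T.deleteEdges {s(i, j)}).Reachable i (qJ jt r l2) :=
        wpos_b jt r HP hsi h2 (by rw [hqb]; exact hnotij)
      exact mem_cluster jt htB hnlT hadjT hq1 hf1 hq2 hf2 near1.1 far2
    · exact absurd (by have := hom_reach HP h2a; rw [hqb, hqx] at this; exact this.symm)
        hnotij
    · have near2 := wpos_a jt r HP hsi h2b (by rw [hqx])
      have hYne : Y1.isLeft ≠ Y2.isLeft := by
        intro hh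
        apply hcxa
        calc x₂.isLeft = l2.isLeft := near2.2
          _ = Y2.isLeft := hil2.symm
          _ = Y1.isLeft := hh.symm
          _ = l1.isLeft := hil1
          _ = a.isLeft := near1.2.symm
      have hroot := z_root hZ1 hZ2 hYne
      obtain ⟨lP, hlP, hrP⟩ :=
        root_reach jt r hroot (hsi i (Reachable.refl _)) (Or.inl rfl : i = i ∨ i = j)
      have farP : ¬ (jt.T.deleteEdges {s(i, j)}).Reachable i lP :=
        fun h => hnotij (h.trans (hjr.trans hrP).symm)
      exact mem_cluster jt htB hnlT hadjT hq2 hf2 hlP (Set.mem_insert _ _) near2.1 farP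
end TwinCore

section TwinDispatch

variable {V : Type u} {J : Type v} {E : V → V → Prop}

lemma hp_gen (jt : Jointree E J) (r : J) {a b x₂ y₂ : TwinJ jt r} {i j : J}
    (hcand : ∀ x y : TwinJ jt r, twinTAdj jt r x y → s(qJ jt r x, qJ jt r y) = s(i, j) →
      s(x, y) = s(a, b) ∨ s(x, y) = s(x₂, y₂)) :
    ∀ x y, ((twinT jt r).deleteEdges (insert s(x₂, y₂) {s(a, b)})).Adj x y →
      s(qJ jt r x, qJ jt r y) ≠ s(i, j) := by
  intro x y hxy heq
  have h := (SimpleGraph.deleteEdges_adj).mp hxy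
  rcases hcand x y h.1 heq with hc | hc
  · exact h.2 (by rw [hc]; exact Set.mem_insert_iff.mpr (Or.inr rfl))
  · exact h.2 (by rw [hc]; exact Set.mem_insert _ _)

lemma hp_gen0 (jt : Jointree E J) (r : J) {a b : TwinJ jt r} {i j : J}
    (hcand : ∀ x y : TwinJ jt r, twinTAdj jt r x y → s(qJ jt r x, qJ jt r y) = s(i, j) →
      s(x, y) = s(a, b)) :
    ∀ x y, ((twinT jt r).deleteEdges {s(a, b)}).Adj x y →
      s(qJ jt r x, qJ jt r y) ≠ s(i, j) := by
  intro x y hxy heq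
  have h := (SimpleGraph.deleteEdges_adj).mp hxy
  exact h.2 (by rw [hcand x y h.1 heq]; exact rfl)

lemma f1pack (jt : Jointree E J) (r : J) (htB : jt.T.IsTree) {i j : J}
    (hadjT : jt.T.Adj i j) (hdj : Duplicated jt r j) (hdi : ¬ Duplicated jt r i) :
    (jt.T.deleteEdges {s(i, j)}).Reachable i r ∧
      (∀ y, (jt.T.deleteEdges {s(i, j)}).Reachable j y → Duplicated jt r y) := by
  have hnj : ¬ (jt.T.deleteEdges {s(i, j)}).Reachable j r := by
    rw [show (s(i, j) : Sym2 J) = s(j, i) from Sym2.eq_swap]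
    exact dup_nbr jt r htB hdj hadjT.symm hdi
  have hir := (two_comp htB.isConnected i j r).resolve_right hnj
  exact ⟨hir, comp_dup jt r htB hadjT hir hdj⟩

lemma f2pack (jt : Jointree E J) (r : J) (htB : jt.T.IsTree) {i j : J}
    (hadjT : jt.T.Adj i j) (hdi : Duplicated jt r i) (hdj : ¬ Duplicated jt r j) :
    (jt.T.deleteEdges {s(i, j)}).Reachable j r ∧
      (∀ y, (jt.T.deleteEdges {s(i, j)}).Reachable i y → Duplicated jt r y) := by
  have hni : ¬ (jt.T.deleteEdges {s(i, j)}).Reachable i r :=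
    dup_nbr jt r htB hdi hadjT hdj
  have hjr := (two_comp htB.isConnected i j r).resolve_left hni
  refine ⟨hjr, ?_⟩
  have h2 := comp_dup jt r htB hadjT.symm
    (by rw [show (s(j, i) : Sym2 J) = s(i, j) from Sym2.eq_swap]; exact hjr) hdi
  intro y hy
  exact h2 y (by rw [show (s(j, i) : Sym2 J) = s(i, j) from Sym2.eq_swap]; exact hy)

lemma fbothpack (jt : Jointree E J) (r : J) (htB : jt.T.IsTree) {i j : J}
    (hadjT : jt.T.Adj i j) (hdi : Duplicated jt r i) (hdj : Duplicated jt r j) :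
    ((jt.T.deleteEdges {s(i, j)}).Reachable i r ∧
      (∀ y, (jt.T.deleteEdges {s(i, j)}).Reachable j y → Duplicated jt r y)) ∨
    ((jt.T.deleteEdges {s(i, j)}).Reachable j r ∧
      (∀ y, (jt.T.deleteEdges {s(i, j)}).Reachable i y → Duplicated jt r y)) := by
  rcases two_comp htB.isConnected i j r with h | h
  · exact Or.inl ⟨h, comp_dup jt r htB hadjT h hdj⟩
  · right
    refine ⟨h, ?_⟩
    have h2 := comp_dup jt r htB hadjT.symm
      (by rw [show (s(j, i) : Sym2 J) = s(i, j) from Sym2.eq_swap]; exact h) hdi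
    intro y hy
    exact h2 y (by rw [show (s(j, i) : Sym2 J) = s(i, j) from Sym2.eq_swap]; exact hy)

lemma main_subset (jt : Jointree E J) (r : J) (htB : jt.T.IsTree)
    (tw : (twinT jt r).IsTree)
    (hne' : ∀ X, (twinH jt r X).Nonempty)
    (hhl' : ∀ X c, c ∈ twinH jt r X → IsLeaf (twinT jt r) c)
    (hlh' : ∀ c, IsLeaf (twinT jt r) c → ∃! X, c ∈ twinH jt r X)
    (a : TwinJ jt r) :
    clusterJT (⟨twinT jt r, tw, twinH jt r, hne', hhl', hlh'⟩ :
        Jointree (twinEdge E) (TwinJ jt r)) a ⊆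
      (pV E) ⁻¹' clusterJT jt (qJ jt r a) := by
  intro Z hZ
  unfold clusterJT at hZ
  dsimp only at hZ
  by_cases hla : IsLeaf (twinT jt r) a
  · rw [if_pos hla] at hZ
    simp only [Set.mem_iUnion, Set.mem_setOf_eq] at hZ
    obtain ⟨Y, hY, hZf⟩ := hZ
    obtain ⟨hqh, hf, -⟩ := host_shape hY hZf
    have hleafB : IsLeaf jt.T (qJ jt r a) := jt.hosts_leaf _ _ hqh
    show pV E Z ∈ clusterJT jt (qJ jt r a)
    rw [clusterJT, if_pos hleafB]
    exact Set.mem_biUnion hqh hf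
  · rw [if_neg hla] at hZ
    simp only [Set.mem_iUnion, Set.mem_setOf_eq] at hZ
    obtain ⟨b, hab, hZs⟩ := hZ
    obtain ⟨⟨Y1, l1, hl1, hZ1, hw1⟩, ⟨Y2, l2, hl2, hZ2, hw2⟩⟩ := hZs
    rw [show (s(b, a) : Sym2 (TwinJ jt r)) = s(a, b) from Sym2.eq_swap] at hw2
    have hnlB : ¬ IsLeaf jt.T (qJ jt r a) := nonleaf jt r hhl' hla
    have hadjT : jt.T.Adj (qJ jt r a) (qJ jt r b) := proj_adj hab
    obtain ⟨hq1, hf1, hil1⟩ := host_shape hl1 hZ1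
    obtain ⟨hq2, hf2, hil2⟩ := host_shape hl2 hZ2
    have hnotij : ¬ (jt.T.deleteEdges {s(qJ jt r a, qJ jt r b)}).Reachable
        (qJ jt r a) (qJ jt r b) := tree_split htB hadjT
    show pV E Z ∈ clusterJT jt (qJ jt r a)
    rcases ha : a with ca | ⟨ua, hda⟩ <;> rcases hb : b with cb | ⟨ub, hdb⟩ <;>
      subst ha <;> subst hb
    · -- a = inl ca, b = inl cb
      have hTab : twinTAdj jt r (Sum.inl ca) (Sum.inl cb) := hab
      by_cases hdi : Duplicated jt r ca <;> by_cases hdj : Duplicated jt r cb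
      · -- both duplicated : second lift is the inr-inr edge
        have HP := hp_gen jt r
          (a := Sum.inl ca) (b := Sum.inl cb)
          (x₂ := Sum.inr ⟨ca, hdi⟩) (y₂ := Sum.inr ⟨cb, hdj⟩) (i := ca) (j := cb)
          (by
            intro x y htw heq
            rcases lift_char htw heq with h | ⟨hi, hj, h⟩ | ⟨hj, hni, h⟩ | ⟨hi, hnj, h⟩
            · exact Or.inl h
            · exact Or.inr h
            · exact absurd hdi hni
            · exact absurd hdj hnj)
        have hF := fbothpack jt r htB (hadjT : jt.T.Adj ca cb) hdi hdj
        refine core jt r htB (a := Sum.inl ca) (b := Sum.inl cb)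
          (x₂ := Sum.inr ⟨ca, hdi⟩) (y₂ := Sum.inr ⟨cb, hdj⟩) (i := ca) (j := cb)
          rfl rfl rfl rfl hadjT hnlB HP ?_ hl1 hZ1 hw1 hl2 hZ2 hw2
        rcases hF with ⟨h1, h2⟩ | ⟨h1, h2⟩
        · exact Or.inl ⟨h1, h2, by simp⟩
        · exact Or.inr ⟨h1, h2, by simp⟩
      · -- ca duplicated, cb not
        have HP := hp_gen jt r
          (a := Sum.inl ca) (b := Sum.inl cb)
          (x₂ := Sum.inr ⟨ca, hdi⟩) (y₂ := Sum.inl cb) (i := ca) (j := cb)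
          (by
            intro x y htw heq
            rcases lift_char htw heq with h | ⟨hi, hj, h⟩ | ⟨hj, hni, h⟩ | ⟨hi, hnj, h⟩
            · exact Or.inl h
            · exact absurd hj hdj
            · exact absurd hj hdj
            · exact Or.inr h)
        have hF := f2pack jt r htB (hadjT : jt.T.Adj ca cb) hdi hdj
        exact core jt r htB (a := Sum.inl ca) (b := Sum.inl cb)
          (x₂ := Sum.inr ⟨ca, hdi⟩) (y₂ := Sum.inl cb) (i := ca) (j := cb)
          rfl rfl rfl rfl hadjT hnlB HP
          (Or.inr ⟨hF.1, hF.2, by simp⟩) hl1 hZ1 hw1 hl2 hZ2 hw2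
      · -- cb duplicated, ca not
        have HP := hp_gen jt r
          (a := Sum.inl ca) (b := Sum.inl cb)
          (x₂ := Sum.inl ca) (y₂ := Sum.inr ⟨cb, hdj⟩) (i := ca) (j := cb)
          (by
            intro x y htw heq
            rcases lift_char htw heq with h | ⟨hi, hj, h⟩ | ⟨hj, hni, h⟩ | ⟨hi, hnj, h⟩
            · exact Or.inl h
            · exact absurd hi hdi
            · exact Or.inr h
            · exact absurd hi hdi)
        have hF := f1pack jt r htB (hadjT : jt.T.Adj ca cb) hdj hdi
        exact core jt r htB (a := Sum.inl ca) (b := Sum.inl cb)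
          (x₂ := Sum.inl ca) (y₂ := Sum.inr ⟨cb, hdj⟩) (i := ca) (j := cb)
          rfl rfl rfl rfl hadjT hnlB HP
          (Or.inl ⟨hF.1, hF.2, by simp⟩) hl1 hZ1 hw1 hl2 hZ2 hw2
      · -- neither duplicated : only one lift
        have HP := hp_gen0 jt r (a := Sum.inl ca) (b := Sum.inl cb) (i := ca) (j := cb)
          (by
            intro x y htw heq
            rcases lift_char htw heq with h | ⟨hi, hj, h⟩ | ⟨hj, hni, h⟩ | ⟨hi, hnj, h⟩
            · exact h
            · exact absurd hi hdi
            · exact absurd hj hdj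
            · exact absurd hi hdi)
        have near1 := hom_reach HP hw1
        have far2R := hom_reach HP hw2
        exact mem_cluster jt htB hnlB hadjT hq1 hf1 hq2 hf2 near1
          (fun h => hnotij (h.trans far2R.symm))
    · -- a = inl ca, b = inr ub
      have hTab : twinTAdj jt r (Sum.inl ca) (Sum.inr ⟨ub, hdb⟩) := hab
      simp only [twinTAdj] at hTab
      have HP := hp_gen jt r
        (a := Sum.inl ca) (b := Sum.inr ⟨ub, hdb⟩)
        (x₂ := Sum.inl ca) (y₂ := Sum.inl ub) (i := ca) (j := ub)
        (by
          intro x y htw heq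
          rcases lift_char htw heq with h | ⟨hi, hj, h⟩ | ⟨hj, hni, h⟩ | ⟨hi, hnj, h⟩
          · exact Or.inr h
          · exact absurd hi hTab.2
          · exact Or.inl h
          · exact absurd hi hTab.2)
      have hF := f1pack jt r htB (hadjT : jt.T.Adj ca ub) hdb hTab.2
      exact core jt r htB (a := Sum.inl ca) (b := Sum.inr ⟨ub, hdb⟩)
        (x₂ := Sum.inl ca) (y₂ := Sum.inl ub) (i := ca) (j := ub)
        rfl rfl rfl rfl hadjT hnlB HP
        (Or.inl ⟨hF.1, hF.2, by simp⟩) hl1 hZ1 hw1 hl2 hZ2 hw2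
    · -- a = inr ua, b = inl cb
      have hTab : twinTAdj jt r (Sum.inr ⟨ua, hda⟩) (Sum.inl cb) := hab
      simp only [twinTAdj] at hTab
      have HP := hp_gen jt r
        (a := Sum.inr ⟨ua, hda⟩) (b := Sum.inl cb)
        (x₂ := Sum.inl ua) (y₂ := Sum.inl cb) (i := ua) (j := cb)
        (by
          intro x y htw heq
          rcases lift_char htw heq with h | ⟨hi, hj, h⟩ | ⟨hj, hni, h⟩ | ⟨hi, hnj, h⟩
          · exact Or.inr h
          · exact absurd hj hTab.2
          · exact absurd hj hTab.2
          · exact Or.inl h)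
      have hF := f2pack jt r htB (hadjT : jt.T.Adj ua cb) hda hTab.2
      exact core jt r htB (a := Sum.inr ⟨ua, hda⟩) (b := Sum.inl cb)
        (x₂ := Sum.inl ua) (y₂ := Sum.inl cb) (i := ua) (j := cb)
        rfl rfl rfl rfl hadjT hnlB HP
        (Or.inr ⟨hF.1, hF.2, by simp⟩) hl1 hZ1 hw1 hl2 hZ2 hw2
    · -- a = inr ua, b = inr ub
      have hTab : twinTAdj jt r (Sum.inr ⟨ua, hda⟩) (Sum.inr ⟨ub, hdb⟩) := hab
      simp only [twinTAdj] at hTab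
      have HP := hp_gen jt r
        (a := Sum.inr ⟨ua, hda⟩) (b := Sum.inr ⟨ub, hdb⟩)
        (x₂ := Sum.inl ua) (y₂ := Sum.inl ub) (i := ua) (j := ub)
        (by
          intro x y htw heq
          rcases lift_char htw heq with h | ⟨hi, hj, h⟩ | ⟨hj, hni, h⟩ | ⟨hi, hnj, h⟩
          · exact Or.inr h
          · exact Or.inl h
          · exact absurd hda hni
          · exact absurd hdb hnj)
      have hF := fbothpack jt r htB (hadjT : jt.T.Adj ua ub) hda hdb
      refine core jt r htB (a := Sum.inr ⟨ua, hda⟩) (b := Sum.inr ⟨ub, hdb⟩)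
        (x₂ := Sum.inl ua) (y₂ := Sum.inl ub) (i := ua) (j := ub)
        rfl rfl rfl rfl hadjT hnlB HP ?_ hl1 hZ1 hw1 hl2 hZ2 hw2
      rcases hF with ⟨h1, h2⟩ | ⟨h1, h2⟩
      · exact Or.inl ⟨h1, h2, by simp⟩
      · exact Or.inr ⟨h1, h2, by simp⟩

end TwinDispatch

section TwinFinal

lemma pre_ncard {V : Type u} [Fintype V] {E : V → V → Prop} (C : Set V) :
    ((pV E) ⁻¹' C).ncard ≤ 2 * C.ncard := by
  have hsub : (pV E) ⁻¹' C ⊆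
      (Sum.inl '' C) ∪ (Sum.inr '' (Subtype.val ⁻¹' C) : Set (TwinVar E)) := by
    rintro (v | x) hv
    · exact Or.inl ⟨v, hv, rfl⟩
    · exact Or.inr ⟨x, hv, rfl⟩
  have h1 : ((Sum.inl '' C : Set (TwinVar E))).ncard = C.ncard :=
    Set.ncard_image_of_injective _ Sum.inl_injective
  have h2 : ((Sum.inr '' (Subtype.val ⁻¹' C) : Set (TwinVar E))).ncard =
      (Subtype.val ⁻¹' C : Set {x : V // ¬ isRoot E x}).ncard :=
    Set.ncard_image_of_injective _ Sum.inr_injective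
  have h3 : (Subtype.val ⁻¹' C : Set {x : V // ¬ isRoot E x}).ncard ≤ C.ncard := by
    rw [← Set.ncard_image_of_injective (Subtype.val ⁻¹' C) Subtype.val_injective]
    exact Set.ncard_le_ncard (Set.image_preimage_subset _ _) (Set.toFinite _)
  calc ((pV E) ⁻¹' C).ncard
      ≤ ((Sum.inl '' C) ∪ (Sum.inr '' (Subtype.val ⁻¹' C) : Set (TwinVar E))).ncard :=
        Set.ncard_le_ncard hsub (Set.toFinite _)
    _ ≤ ((Sum.inl '' C : Set (TwinVar E))).ncard +
        ((Sum.inr '' (Subtype.val ⁻¹' C) : Set (TwinVar E))).ncard := Set.ncard_union_le _ _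
    _ ≤ 2 * C.ncard := by omega

end TwinFinal

theorem twin_jointree_width_and_size' {V : Type*} [Fintype V]
    (E : V → V → Prop) (hE : IsAcyclicRel E)
    {J : Type*} [Finite J] (jt : Jointree E J) (r : J)
    (hr : ∀ X : V, r ∈ jt.H X → isRoot E X)
    (jt' : Jointree (twinEdge E) (TwinJ jt r))
    (hT : jt'.T = twinT jt r) (hH : jt'.H = twinH jt r) :
    widthJT jt' ≤ 2 * widthJT jt + 1 ∧ Nat.card (TwinJ jt r) ≤ 2 * Nat.card J := by
  constructor
  · obtain ⟨T2, tw, H2, hne2, hhl2, hlh2⟩ := jt'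
    dsimp only at hT hH
    subst hT hH
    have htB : jt.T.IsTree := jt.isTree
    have hbound : ∀ a : TwinJ jt r,
        (clusterJT (⟨twinT jt r, tw, twinH jt r, hne2, hhl2, hlh2⟩ :
          Jointree (twinEdge E) (TwinJ jt r)) a).ncard ≤
        2 * (⨆ i : J, (clusterJT jt i).ncard) := by
      intro a
      have hsub := main_subset jt r htB tw hne2 hhl2 hlh2 a
      calc (clusterJT (⟨twinT jt r, tw, twinH jt r, hne2, hhl2, hlh2⟩ :
              Jointree (twinEdge E) (TwinJ jt r)) a).ncard
          ≤ ((pV E) ⁻¹' clusterJT jt (qJ jt r a)).ncard :=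
            Set.ncard_le_ncard hsub (Set.toFinite _)
        _ ≤ 2 * (clusterJT jt (qJ jt r a)).ncard := pre_ncard _
        _ ≤ 2 * (⨆ i : J, (clusterJT jt i).ncard) := by
            have hb : BddAbove (Set.range fun i : J => (clusterJT jt i).ncard) :=
              Set.Finite.bddAbove (Set.finite_range _)
            exact Nat.mul_le_mul_left 2 (le_ciSup hb (qJ jt r a))
    have hsup : (⨆ a : TwinJ jt r,
        (clusterJT (⟨twinT jt r, tw, twinH jt r, hne2, hhl2, hlh2⟩ :
          Jointree (twinEdge E) (TwinJ jt r)) a).ncard) ≤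
        2 * (⨆ i : J, (clusterJT jt i).ncard) := by
      by_cases hne : Nonempty (TwinJ jt r)
      · exact ciSup_le hbound
      · haveI : IsEmpty (TwinJ jt r) := not_nonempty_iff.mp hne
        rw [ciSup_of_empty]
        exact Nat.zero_le _
    unfold widthJT
    omega
  · have h1 : Nat.card (TwinJ jt r) =
        Nat.card J + Nat.card {u : J // Duplicated jt r u} := Nat.card_sum
    have h2 : Nat.card {u : J // Duplicated jt r u} ≤ Nat.card J :=
      Nat.card_le_card_of_injective Subtype.val Subtype.val_injective
    omega


/-- the twin jointree produced by Algorithm 1 has width at most `2w + 1`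
and at most `2n` nodes, where `w` and `n` are the width and number of nodes of the base
jointree. -/
theorem twin_jointree_width_and_size {V : Type*} [Fintype V]
    (E : V → V → Prop) (hE : IsAcyclicRel E)
    {J : Type*} [Finite J] (jt : Jointree E J) (r : J)
    (hr : ∀ X : V, r ∈ jt.H X → isRoot E X)
    (jt' : Jointree (twinEdge E) (TwinJ jt r))
    (hT : jt'.T = twinT jt r) (hH : jt'.H = twinH jt r) :
    widthJT jt' ≤ 2 * widthJT jt + 1 ∧ Nat.card (TwinJ jt r) ≤ 2 * Nat.card J := by
  exact twin_jointree_width_and_size' E hE jt r hr jt' hT hH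

end Counterfactual
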